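/- In 4d Minkowski spacetime, the conjecture 8π σ(y,z)² ψ(z) = ∫_{[y,z]} □□(σ(y,x)² ψ(x)) d⁴x holds for constant ψ: with σ(y,x) = τ²/2 (half the squared proper time from y to x) and [y,z] the causal interval of total proper time T between y and z, one has ∫_{[y,z]} □□(σ(y,x)²) d⁴x = 8π σ(y,z)² = 8π (T²/2)² = 2π T⁴, consistent with the flat-space interval volume V[y,z] = (π/24) T⁴. -/

import Mathlib

set_option autoImplicit false

open MeasureTheory Real

noncomputable section

/-- Time derivative `∂_t` on functions of 4d Minkowski space `ℝ × ℝ³`. -/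
def timeDeriv (g : ℝ × EuclideanSpace ℝ (Fin 3) → ℝ) :
    ℝ × EuclideanSpace ℝ (Fin 3) → ℝ :=
  fun p => deriv (fun s => g (s, p.2)) p.1

/-- Spatial directional derivative `∂_i` on functions of 4d Minkowski space. -/
def spaceDeriv (i : Fin 3) (g : ℝ × EuclideanSpace ℝ (Fin 3) → ℝ) :
    ℝ × EuclideanSpace ℝ (Fin 3) → ℝ :=
  fun p => deriv (fun s : ℝ => g (p.1, p.2 + s • EuclideanSpace.single i (1 : ℝ))) 0

/-- The flat d'Alembertian `□ = ∂_t² - Δ` on 4d Minkowski space. -/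
def box4 (g : ℝ × EuclideanSpace ℝ (Fin 3) → ℝ) :
    ℝ × EuclideanSpace ℝ (Fin 3) → ℝ :=
  fun p => timeDeriv (timeDeriv g) p - ∑ i : Fin 3, spaceDeriv i (spaceDeriv i g) p

/-- The square of Synge's world function from the origin in 4d Minkowski space,
`σ(y,x)² = ((t² - |x⃗|²)/2)²`. -/
def syngeSq : ℝ × EuclideanSpace ℝ (Fin 3) → ℝ :=
  fun p => ((p.1 ^ 2 - ‖p.2‖ ^ 2) / 2) ^ 2

/-- The causal interval between `y = (0,0⃗)` and `z = (T,0⃗)` in 4d Minkowski space. -/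
def causalInterval (T : ℝ) : Set (ℝ × EuclideanSpace ℝ (Fin 3)) :=
  {p | ‖p.2‖ ≤ p.1 ∧ ‖p.2‖ ≤ T - p.1}

/-!
Both `σ²` and `□ σ²` are functions of the Lorentz invariant `u = t² - |x⃗|²`, and on such
functions the wave operator acts by `□ f(u) = 4 u f''(u) + 8 f'(u)`. Hence `□ σ² = 6 u` and
`□□ σ² = 48` is constant, so the integral is `48 · vol [y, z]`. By Cavalieri, the slice of
`[y, z]` at time `t` is a ball of radius `min t (T - t)`, whence
`vol [y, z] = ∫₀ᵀ (4π/3) min(t, T - t)³ dt = π T⁴ / 24`.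
-/

local notation "ℝ³" => EuclideanSpace ℝ (Fin 3)

lemma timeDeriv_eq_of_hasDerivAt {g : ℝ × ℝ³ → ℝ} {p : ℝ × ℝ³} {a : ℝ}
    (h : HasDerivAt (fun s => g (s, p.2)) a p.1) : timeDeriv g p = a :=
  h.deriv

lemma spaceDeriv_eq_of_hasDerivAt {g : ℝ × ℝ³ → ℝ} {p : ℝ × ℝ³} {i : Fin 3} {a : ℝ}
    (h : HasDerivAt (fun s : ℝ => g (p.1, p.2 + s • EuclideanSpace.single i (1 : ℝ))) a 0) :
    spaceDeriv i g p = a :=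
  h.deriv

lemma hasDerivAt_add_smul_single_apply {ι : Type*} [Fintype ι] [DecidableEq ι]
    (x : EuclideanSpace ℝ ι) (i : ι) (s : ℝ) :
    HasDerivAt (fun s : ℝ => (x + s • EuclideanSpace.single i (1 : ℝ)) i) 1 s := by
  simpa using (hasDerivAt_id s).const_add (x i)

/-- `2 σ(y, x) = t² - |x⃗|²` for `y` the origin. -/
def minkowskiNormSq (p : ℝ × ℝ³) : ℝ := p.1 ^ 2 - ‖p.2‖ ^ 2

section
variable {g : ℝ → ℝ} (hg : Differentiable ℝ g) (p : ℝ × ℝ³)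
include hg

lemma hasDerivAt_comp_minkowskiNormSq_time :
    HasDerivAt (fun s => g (minkowskiNormSq (s, p.2))) (2 * p.1 * deriv g (minkowskiNormSq p))
      p.1 := by
  have h : HasDerivAt (fun s => minkowskiNormSq (s, p.2)) (2 * p.1) p.1 := by
    simpa [minkowskiNormSq] using (hasDerivAt_pow 2 p.1).sub_const (‖p.2‖ ^ 2)
  exact ((hg _).hasDerivAt.comp p.1 h).congr_deriv (mul_comm _ _)

lemma hasDerivAt_comp_minkowskiNormSq_space (i : Fin 3) :
    HasDerivAt (fun s : ℝ => g (minkowskiNormSq (p.1, p.2 + s • EuclideanSpace.single i (1 : ℝ))))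
      (-2 * p.2 i * deriv g (minkowskiNormSq p)) 0 := by
  have hline := ((hasDerivAt_id (0 : ℝ)).smul_const
    (EuclideanSpace.single i (1 : ℝ))).const_add p.2
  have h : HasDerivAt
      (fun s : ℝ => minkowskiNormSq (p.1, p.2 + s • EuclideanSpace.single i (1 : ℝ)))
      (-2 * p.2 i) 0 :=
    (hline.norm_sq.const_sub (p.1 ^ 2)).congr_deriv (by simp [EuclideanSpace.inner_single_right])
  exact ((hg _).hasDerivAt.comp 0 h).congr_deriv (by simp [mul_comm])

end

theorem box4_comp_minkowskiNormSq {f : ℝ → ℝ} (hf : Differentiable ℝ f)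
    (hf' : Differentiable ℝ (deriv f)) :
    box4 (fun p => f (minkowskiNormSq p)) = fun p =>
      4 * minkowskiNormSq p * deriv (deriv f) (minkowskiNormSq p) +
        8 * deriv f (minkowskiNormSq p) := by
  have htime : timeDeriv (fun p => f (minkowskiNormSq p)) =
      fun p => 2 * p.1 * deriv f (minkowskiNormSq p) :=
    funext fun p => timeDeriv_eq_of_hasDerivAt (hasDerivAt_comp_minkowskiNormSq_time hf p)
  have hspace : ∀ i, spaceDeriv i (fun p => f (minkowskiNormSq p)) =
      fun p => -2 * p.2 i * deriv f (minkowskiNormSq p) := fun i =>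
    funext fun p => spaceDeriv_eq_of_hasDerivAt (hasDerivAt_comp_minkowskiNormSq_space hf p i)
  funext p
  have htt : timeDeriv (fun p => 2 * p.1 * deriv f (minkowskiNormSq p)) p =
      2 * deriv f (minkowskiNormSq p) + 4 * p.1 ^ 2 * deriv (deriv f) (minkowskiNormSq p) := by
    rw [timeDeriv_eq_of_hasDerivAt (((hasDerivAt_id p.1).const_mul 2).mul
      (hasDerivAt_comp_minkowskiNormSq_time hf' p))]
    simp only [id]
    ring
  have hss : ∀ i, spaceDeriv i (fun p => -2 * p.2 i * deriv f (minkowskiNormSq p)) p =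
      -2 * deriv f (minkowskiNormSq p) + 4 * p.2 i ^ 2 * deriv (deriv f) (minkowskiNormSq p) := by
    intro i
    rw [spaceDeriv_eq_of_hasDerivAt (((hasDerivAt_add_smul_single_apply p.2 i 0).const_mul (-2)).mul
      (hasDerivAt_comp_minkowskiNormSq_space hf' p i))]
    simp only [mul_one, zero_smul, add_zero, Prod.mk.eta]
    ring
  rw [box4, htime, htt]
  simp only [hspace, hss, Finset.sum_add_distrib, Finset.sum_const, Finset.card_univ,
    Fintype.card_fin, ← Finset.sum_mul, ← Finset.mul_sum, ← EuclideanSpace.real_norm_sq_eq]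
  rw [minkowskiNormSq]
  ring

lemma box4_syngeSq : box4 syngeSq = fun p => 6 * minkowskiNormSq p := by
  have hd : deriv (fun u : ℝ => (u / 2) ^ 2) = fun u => u / 2 := by
    funext u
    simp only [differentiableAt_fun_id, DifferentiableAt.div_const, deriv_fun_pow,
      deriv_div_const, deriv_id'']
    ring
  have hdd : deriv (fun u : ℝ => u / 2) = fun _ => 1 / 2 := by
    funext u; simp
  have h := box4_comp_minkowskiNormSq (f := fun u => (u / 2) ^ 2) (by fun_prop)
    (by rw [hd]; fun_prop)
  rw [hd, hdd] at h
  exact h.trans (funext fun p => by ring)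

lemma box4_box4_syngeSq : box4 (box4 syngeSq) = fun _ => 48 := by
  have hd : deriv (fun u : ℝ => 6 * u) = fun _ => 6 := by
    funext u; simp
  have h := box4_comp_minkowskiNormSq (f := fun u => 6 * u) (by fun_prop)
    (by rw [hd]; fun_prop)
  rw [hd, deriv_const'] at h
  rw [box4_syngeSq]
  exact h.trans (funext fun p => by norm_num)

lemma causalInterval_slice (T t : ℝ) :
    Prod.mk t ⁻¹' causalInterval T = Metric.closedBall (0 : ℝ³) (min t (T - t)) := by
  ext x
  simp [causalInterval]

lemma isClosed_causalInterval (T : ℝ) : IsClosed (causalInterval T) :=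
  (isClosed_le continuous_snd.norm continuous_fst).inter
    (isClosed_le continuous_snd.norm (continuous_const.sub continuous_fst))

lemma integral_min_sub_pow (n : ℕ) {T : ℝ} (hT : 0 ≤ T) :
    ∫ t in (0 : ℝ)..T, min t (T - t) ^ n = 2 * (T / 2) ^ (n + 1) / (n + 1) := by
  have hcont : Continuous fun t : ℝ => min t (T - t) ^ n := by fun_prop
  have hleft : ∫ t in (0 : ℝ)..T / 2, min t (T - t) ^ n = ∫ t in (0 : ℝ)..T / 2, t ^ n := by
    refine intervalIntegral.integral_congr fun t ht => ?_
    rw [Set.uIcc_of_le (by linarith)] at ht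
    simp only [min_eq_left (by linarith [ht.2] : t ≤ T - t)]
  have hright : ∫ t in T / 2..T, min t (T - t) ^ n = ∫ t in T / 2..T, (T - t) ^ n := by
    refine intervalIntegral.integral_congr fun t ht => ?_
    rw [Set.uIcc_of_le (by linarith)] at ht
    simp only [min_eq_right (by linarith [ht.1] : T - t ≤ t)]
  rw [← intervalIntegral.integral_add_adjacent_intervals (b := T / 2)
      (hcont.intervalIntegrable _ _) (hcont.intervalIntegrable _ _), hleft, hright,
    intervalIntegral.integral_comp_sub_left (fun x => x ^ n), sub_self,
    show T - T / 2 = T / 2 by ring, integral_pow]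
  ring

lemma volume_causalInterval {T : ℝ} (hT : 0 ≤ T) :
    volume (causalInterval T) = ENNReal.ofReal (π / 24 * T ^ 4) := by
  have hsupp : ∀ t ∉ Set.Icc 0 T, min t (T - t) < 0 := by
    intro t ht
    rw [Set.mem_Icc, not_and_or, not_le, not_le] at ht
    rcases ht with ht | ht
    · exact min_lt_of_left_lt ht
    · exact min_lt_of_right_lt (by linarith)
  have hnonneg : ∀ t ∈ Set.Icc 0 T, 0 ≤ min t (T - t) := fun t ht =>
    le_min ht.1 (by linarith [ht.2])
  calc volume (causalInterval T)
      = ∫⁻ t, volume (Prod.mk t ⁻¹' causalInterval T) := by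
        rw [Measure.volume_eq_prod, Measure.prod_apply (isClosed_causalInterval T).measurableSet]
    _ = ∫⁻ t in Set.Icc 0 T, ENNReal.ofReal (min t (T - t)) ^ 3 * ENNReal.ofReal (π * 4 / 3) := by
        simp_rw [causalInterval_slice, EuclideanSpace.volume_closedBall_fin_three]
        refine (setLIntegral_eq_of_support_subset
          (Function.support_subset_iff'.2 fun t ht => ?_)).symm
        simp [ENNReal.ofReal_eq_zero.2 (hsupp t ht).le]
    _ = ∫⁻ t in Set.Icc 0 T, ENNReal.ofReal (π * 4 / 3 * min t (T - t) ^ 3) := by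
        refine setLIntegral_congr_fun measurableSet_Icc fun t ht => ?_
        rw [ENNReal.ofReal_mul (by positivity), ENNReal.ofReal_pow (hnonneg t ht), mul_comm]
    _ = ENNReal.ofReal (∫ t in Set.Icc 0 T, π * 4 / 3 * min t (T - t) ^ 3) := by
        refine (ofReal_integral_eq_lintegral_ofReal ?_ ?_).symm
        · exact (by fun_prop :
            Continuous fun t : ℝ => π * 4 / 3 * min t (T - t) ^ 3).integrableOn_Icc
        · refine ae_restrict_of_forall_mem measurableSet_Icc fun t ht => ?_
          have := hnonneg t ht
          positivity
    _ = ENNReal.ofReal (π / 24 * T ^ 4) := by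
        rw [integral_Icc_eq_integral_Ioc, ← intervalIntegral.integral_of_le hT,
          intervalIntegral.integral_const_mul, integral_min_sub_pow 3 hT]
        congr 1
        push_cast
        ring

/-- In 4d Minkowski spacetime the conjecture
`8π σ(y,z)² ψ(z) = ∫_{[y,z]} □□(σ(y,x)² ψ(x)) d⁴x` holds for constant `ψ`:
with `y` the origin, `z = (T,0⃗)` (so `σ(y,z) = T²/2`), one has
`∫_{[y,z]} □□(σ²) d⁴x = 8π (T²/2)² = 2π T⁴`, consistent with the interval volume
`V[y,z] = (π/24) T⁴`. -/
theorem conjecture_4d_constant_psi (T : ℝ) (hT : 0 < T) :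
    (∫ p in causalInterval T, box4 (box4 syngeSq) p = 8 * π * (T ^ 2 / 2) ^ 2) ∧
    (8 * π * (T ^ 2 / 2) ^ 2 = 2 * π * T ^ 4) ∧
    volume (causalInterval T) = ENNReal.ofReal (π / 24 * T ^ 4) := by
  have hvol := volume_causalInterval hT.le
  refine ⟨?_, by ring, hvol⟩
  rw [box4_box4_syngeSq, setIntegral_const, measureReal_def, hvol,
    ENNReal.toReal_ofReal (by positivity), smul_eq_mul]
  ring

end
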